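/- arXiv:2407.12289 — 5 statements merged into one kernel-verified Lean document; each statement's English description precedes it below -/
import Mathlib

section
/- Let s ≥ 1 and n ≥ 2s. If F is an intersecting family of signed s-sets from [n] (i.e., functions f : A → {0,1} with A ⊆ [n], |A| = s, where two signed sets intersect if they agree in value on some common element of their domains), then |F| ≤ C(n-1, s-1)·2^{s-1}. -/
open Finset

/-- A signed `s`-set on `[n]`, encoded as a subset of `Fin n × Bool` containing at most
one of `(i, false)`, `(i, true)` for each `i`, with exactly `s` elements.  The underlying
set is the set of first coordinates, and the sign of `i` is the second coordinate. -/
def signedFamily (n s : ℕ) : Finset (Finset (Fin n × Bool)) :=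
  univ.filter fun F =>
    (∀ i : Fin n, ¬((i, false) ∈ F ∧ (i, true) ∈ F)) ∧ F.card = s

/-- A family of finite sets is intersecting if any two members meet.  For signed sets as
encoded above, this says the two signed sets agree in value on some common element. -/
def Intersecting {α : Type*} [DecidableEq α] (𝓕 : Finset (Finset α)) : Prop :=
  ∀ A ∈ 𝓕, ∀ B ∈ 𝓕, (A ∩ B).Nonempty

namespace SignedEKRAux

variable {n s : ℕ}

/-- the ground set of a signed set -/
def gr (F : Finset (Fin n × Bool)) : Finset (Fin n) := F.image Prod.fst

/-- the set of positively-signed coordinates -/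
def pos (F : Finset (Fin n × Bool)) : Finset (Fin n) :=
  (F.filter fun p => p.2 = true).image Prod.fst

lemma mem_signed {F : Finset (Fin n × Bool)} (h : F ∈ signedFamily n s) :
    (∀ i : Fin n, ¬((i, false) ∈ F ∧ (i, true) ∈ F)) ∧ F.card = s := by
  simpa [signedFamily] using h

lemma mem_pos_iff {F : Finset (Fin n × Bool)} {i : Fin n} :
    i ∈ pos F ↔ (i, true) ∈ F := by
  constructor
  · rintro hi
    simp only [pos, mem_image, mem_filter] at hi
    obtain ⟨⟨j, b⟩, ⟨hjF, hb⟩, hj⟩ := hi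
    cases hb; cases hj; exact hjF
  · intro h
    exact mem_image.2 ⟨(i, true), mem_filter.2 ⟨h, rfl⟩, rfl⟩

lemma mem_gr_iff {F : Finset (Fin n × Bool)} {i : Fin n} :
    i ∈ gr F ↔ (i, true) ∈ F ∨ (i, false) ∈ F := by
  constructor
  · rintro hi
    obtain ⟨⟨j, b⟩, hjF, hj⟩ := mem_image.1 hi
    cases hj
    cases b
    · exact Or.inr hjF
    · exact Or.inl hjF
  · rintro (h | h)
    · exact mem_image.2 ⟨(i, true), h, rfl⟩
    · exact mem_image.2 ⟨(i, false), h, rfl⟩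

lemma gr_card {F : Finset (Fin n × Bool)} (h : F ∈ signedFamily n s) :
    (gr F).card = s := by
  obtain ⟨h1, h2⟩ := mem_signed h
  rw [← h2, gr]
  apply Finset.card_image_of_injOn
  rintro ⟨i, b⟩ hi ⟨j, c⟩ hj (hij : i = j)
  subst hij
  congr 1
  by_contra hbc
  cases b <;> cases c
  · exact hbc rfl
  · exact absurd ⟨hi, hj⟩ (h1 i)
  · exact absurd ⟨hj, hi⟩ (h1 i)
  · exact hbc rfl

lemma pos_subset_gr {F : Finset (Fin n × Bool)} : pos F ⊆ gr F := fun i hi =>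
  mem_gr_iff.2 (Or.inl (mem_pos_iff.1 hi))

/-- a signed set is determined by its ground set and its positive part -/
lemma pos_inj {F G : Finset (Fin n × Bool)} (hF : F ∈ signedFamily n s)
    (hG : G ∈ signedFamily n s) (hgr : gr F = gr G) (hpos : pos F = pos G) : F = G := by
  have key : ∀ F G : Finset (Fin n × Bool), F ∈ signedFamily n s → G ∈ signedFamily n s →
      gr F = gr G → pos F = pos G → G ⊆ F := by
    rintro F G hF hG hgr hpos ⟨i, b⟩ hp
    cases b
    · have hiG : i ∉ pos G := fun h => (mem_signed hG).1 i ⟨hp, mem_pos_iff.1 h⟩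
      have hiF : (i, true) ∉ F := fun h => hiG (by rw [← hpos]; exact mem_pos_iff.2 h)
      have hi : i ∈ gr F := by rw [hgr]; exact mem_gr_iff.2 (Or.inr hp)
      rcases mem_gr_iff.1 hi with h | h
      · exact absurd h hiF
      · exact h
    · exact mem_pos_iff.1 (hpos ▸ mem_pos_iff.2 hp)
  exact Finset.Subset.antisymm (key G F hG hF hgr.symm hpos.symm) (key F G hF hG hgr hpos)

end SignedEKRAux

theorem signed_EKR (n s : ℕ) (hs : 1 ≤ s) (hn : 2 * s ≤ n)
    (𝓕 : Finset (Finset (Fin n × Bool))) (hsub : 𝓕 ⊆ signedFamily n s)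
    (hint : Intersecting 𝓕) :
    𝓕.card ≤ (n - 1).choose (s - 1) * 2 ^ (s - 1) := by
  classical
  open SignedEKRAux in
  set 𝒜 : Finset (Finset (Fin n)) := 𝓕.image gr with h𝒜def
  have hAcard : ∀ A ∈ 𝒜, A.card = s := by
    rintro A hA
    obtain ⟨F, hF, rfl⟩ := mem_image.1 hA
    exact SignedEKRAux.gr_card (hsub hF)
  -- the ground family is intersecting, so EKR applies
  have hAint : (𝒜 : Set (Finset (Fin n))).Intersecting := by
    rintro A hA B hB hdis
    obtain ⟨F, hF, rfl⟩ := mem_image.1 (Finset.mem_coe.1 hA)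
    obtain ⟨G, hG, rfl⟩ := mem_image.1 (Finset.mem_coe.1 hB)
    obtain ⟨⟨i, b⟩, hp⟩ := hint F hF G hG
    rw [mem_inter] at hp
    exact (Finset.disjoint_left.1 hdis (mem_image.2 ⟨_, hp.1, rfl⟩))
      (mem_image.2 ⟨_, hp.2, rfl⟩)
  have hA_EKR : 𝒜.card ≤ (n - 1).choose (s - 1) := by
    refine Finset.erdos_ko_rado hAint (fun A hA => hAcard A (Finset.mem_coe.1 hA)) ?_
    rw [Nat.le_div_iff_mul_le two_pos]
    omega
  -- each fiber over a ground set has at most 2^(s-1) members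
  have hfib : ∀ A ∈ 𝒜, (𝓕.filter fun F => SignedEKRAux.gr F = A).card ≤ 2 ^ (s - 1) := by
    intro A hA
    set fib : Finset (Finset (Fin n × Bool)) := 𝓕.filter fun F => SignedEKRAux.gr F = A
      with hfibdef
    have hfibmem : ∀ F ∈ fib, F ∈ 𝓕 ∧ SignedEKRAux.gr F = A := by
      intro F hF; exact mem_filter.1 hF
    have hAc : A.card = s := hAcard A hA
    set 𝒮 : Finset (Finset (Fin n)) := fib.image SignedEKRAux.pos with h𝒮def
    have hcard : fib.card = 𝒮.card := by
      refine (Finset.card_image_of_injOn ?_).symm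
      intro F hF G hG hpos
      obtain ⟨hF𝓕, hFA⟩ := hfibmem F hF
      obtain ⟨hG𝓕, hGA⟩ := hfibmem G hG
      exact SignedEKRAux.pos_inj (hsub hF𝓕) (hsub hG𝓕) (hFA.trans hGA.symm) hpos
    have h𝒮sub : 𝒮 ⊆ A.powerset := by
      rintro S hS
      obtain ⟨F, hF, rfl⟩ := mem_image.1 hS
      rw [mem_powerset, ← (hfibmem F hF).2]
      exact SignedEKRAux.pos_subset_gr
    have hnocompl : ∀ S ∈ 𝒮, A \ S ∉ 𝒮 := by
      rintro S hS hcS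
      obtain ⟨F, hF, rfl⟩ := mem_image.1 hS
      obtain ⟨G, hG, hGeq⟩ := mem_image.1 hcS
      obtain ⟨hF𝓕, hFA⟩ := hfibmem F hF
      obtain ⟨hG𝓕, hGA⟩ := hfibmem G hG
      obtain ⟨⟨i, b⟩, hp⟩ := hint F hF𝓕 G hG𝓕
      rw [mem_inter] at hp
      cases b
      · -- (i, false) in both F and G
        have hiF : i ∉ SignedEKRAux.pos F := fun h =>
          (SignedEKRAux.mem_signed (hsub hF𝓕)).1 i ⟨hp.1, SignedEKRAux.mem_pos_iff.1 h⟩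
        have hiA : i ∈ A := by
          rw [← hFA]; exact SignedEKRAux.mem_gr_iff.2 (Or.inr hp.1)
        have : i ∈ SignedEKRAux.pos G := by
          rw [hGeq]; exact mem_sdiff.2 ⟨hiA, hiF⟩
        exact (SignedEKRAux.mem_signed (hsub hG𝓕)).1 i
          ⟨hp.2, SignedEKRAux.mem_pos_iff.1 this⟩
      · -- (i, true) in both F and G
        have h1 : i ∈ SignedEKRAux.pos F := SignedEKRAux.mem_pos_iff.2 hp.1
        have h2 : i ∈ SignedEKRAux.pos G := SignedEKRAux.mem_pos_iff.2 hp.2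
        rw [hGeq] at h2
        exact (mem_sdiff.1 h2).2 h1
    have hdisj : Disjoint 𝒮 (𝒮.image fun S => A \ S) := by
      rw [Finset.disjoint_right]
      rintro S hS hS'
      obtain ⟨T, hT, rfl⟩ := mem_image.1 hS
      exact hnocompl T hT hS'
    have himg : (𝒮.image fun S => A \ S).card = 𝒮.card := by
      refine Finset.card_image_of_injOn ?_
      intro S hS T hT hST
      have hSA := mem_powerset.1 (h𝒮sub hS)
      have hTA := mem_powerset.1 (h𝒮sub hT)
      have hST' : A \ S = A \ T := hST
      rw [← Finset.sdiff_sdiff_eq_self hSA, hST', Finset.sdiff_sdiff_eq_self hTA]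
    have hsum : 𝒮.card + 𝒮.card ≤ 2 ^ s := by
      calc 𝒮.card + 𝒮.card = (𝒮 ∪ 𝒮.image fun S => A \ S).card := by
            rw [Finset.card_union_of_disjoint hdisj, himg]
        _ ≤ A.powerset.card := by
            refine Finset.card_le_card (Finset.union_subset h𝒮sub ?_)
            rintro S hS
            obtain ⟨T, hT, rfl⟩ := mem_image.1 hS
            exact mem_powerset.2 (Finset.sdiff_subset)
        _ = 2 ^ s := by rw [Finset.card_powerset, hAc]
    have h2s : 2 ^ s = 2 ^ (s - 1) + 2 ^ (s - 1) := by
      have h' : 2 ^ (s - 1) * 2 = 2 ^ s := by rw [← pow_succ, Nat.sub_add_cancel hs]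
      omega
    rw [hcard]
    omega
  -- put it together
  have hsum : 𝓕.card = ∑ A ∈ 𝒜, (𝓕.filter fun F => SignedEKRAux.gr F = A).card :=
    Finset.card_eq_sum_card_fiberwise fun F hF => mem_image_of_mem _ hF
  calc 𝓕.card = ∑ A ∈ 𝒜, (𝓕.filter fun F => SignedEKRAux.gr F = A).card := hsum
    _ ≤ ∑ _A ∈ 𝒜, 2 ^ (s - 1) := Finset.sum_le_sum hfib
    _ = 𝒜.card * 2 ^ (s - 1) := by rw [Finset.sum_const, smul_eq_mul]
    _ ≤ (n - 1).choose (s - 1) * 2 ^ (s - 1) := Nat.mul_le_mul_right _ hA_EKR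
end

section
/- Let p, s ≥ 1 and n = 2p+s. If F ⊆ H^(p,s)(n) is intersecting, then |F| ≤ (1/2)·|H^(p,s)(n)|, and consequently |F| ≤ |H^(p,s)_x(n)| for any vertex x; that is, H^(p,s)(2p+s) is EKR. -/
open Finset

/-- The family `H^(p,s)(n)` of vertex subsets of the perfect matching graph `M_n`
with exactly `p` full edges and exactly `s` singleton vertices. -/
def mFamily (n p s : ℕ) : Finset (Finset (Fin n × Bool)) :=
  univ.filter fun F =>
    (univ.filter fun i : Fin n => ((i, false) ∈ F ∧ (i, true) ∈ F)).card = p ∧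
    (univ.filter fun i : Fin n => Xor ((i, false) ∈ F) ((i, true) ∈ F)).card = s

/-- The star `H^(p,s)_x(n)`: members of `H^(p,s)(n)` containing the vertex `x`. -/
def mStar (n p s : ℕ) (x : Fin n × Bool) : Finset (Finset (Fin n × Bool)) :=
  (mFamily n p s).filter fun F => x ∈ F

lemma compl_mem_mFamily (n p s : ℕ) (hn : n = 2 * p + s) {F : Finset (Fin n × Bool)}
    (hF : F ∈ mFamily n p s) : Fᶜ ∈ mFamily n p s := by
  simp only [mFamily, mem_filter, mem_univ, true_and, Finset.mem_compl] at hF ⊢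
  obtain ⟨h1, h2⟩ := hF
  have hxor : (univ.filter fun i : Fin n => Xor ((i,false) ∉ F) ((i,true) ∉ F))
      = (univ.filter fun i : Fin n => Xor ((i,false) ∈ F) ((i,true) ∈ F)) := by
    apply filter_congr; intro i _; simp [Xor]; tauto
  refine ⟨?_, by rw [hxor, h2]⟩
  have hsplit : (univ.filter fun i : Fin n => ((i,false) ∈ F ∧ (i,true) ∈ F) ∨
      Xor ((i,false) ∈ F) ((i,true) ∈ F)).card = p + s := by
    rw [filter_or, card_union_of_disjoint, h1, h2]
    rw [disjoint_filter]
    intro i _ hi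
    simp [Xor]; tauto
  have htot := card_filter_add_card_filter_not (s := (univ : Finset (Fin n)))
    (p := fun i : Fin n => ((i,false) ∈ F ∧ (i,true) ∈ F) ∨ Xor ((i,false) ∈ F) ((i,true) ∈ F))
  have hneg : (univ.filter fun i : Fin n => ¬ (((i,false) ∈ F ∧ (i,true) ∈ F) ∨
      Xor ((i,false) ∈ F) ((i,true) ∈ F)))
      = (univ.filter fun i : Fin n => (i,false) ∉ F ∧ (i,true) ∉ F) := by
    apply filter_congr; intro i _; simp [Xor]; tauto
  rw [hneg, hsplit] at htot
  simp only [card_univ, Fintype.card_prod, Fintype.card_fin] at htot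
  omega

lemma star_half (n p s : ℕ) (hn : n = 2 * p + s) (x : Fin n × Bool) :
    2 * (mStar n p s x).card = (mFamily n p s).card := by
  have hbij : ((mFamily n p s).filter fun F => ¬ (x ∈ F)).card = (mStar n p s x).card := by
    refine Finset.card_bij' (fun F _ => Fᶜ) (fun F _ => Fᶜ) ?_ ?_
      (fun F _ => by simp) (fun F _ => by simp)
    · intro F hF
      simp only [mem_filter, mStar, Finset.mem_compl] at hF ⊢
      exact ⟨compl_mem_mFamily n p s hn hF.1, hF.2⟩
    · intro F hF
      simp only [mem_filter, mStar, Finset.mem_compl] at hF ⊢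
      exact ⟨compl_mem_mFamily n p s hn hF.1, by simp [hF.2]⟩
  have htot := card_filter_add_card_filter_not (s := mFamily n p s)
    (p := fun F => x ∈ F)
  rw [hbij] at htot
  unfold mStar at htot ⊢
  omega

theorem EKR_matching_boundary_case (n p s : ℕ) (hp : 1 ≤ p) (hs : 1 ≤ s)
    (hn : n = 2 * p + s) (𝓕 : Finset (Finset (Fin n × Bool)))
    (hsub : 𝓕 ⊆ mFamily n p s) (hint : Intersecting 𝓕) :
    2 * 𝓕.card ≤ (mFamily n p s).card ∧
      ∀ x : Fin n × Bool, 𝓕.card ≤ (mStar n p s x).card := by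
  have h1 : 2 * 𝓕.card ≤ (mFamily n p s).card := by
    have hdisj : Disjoint 𝓕 (𝓕.image compl) := by
      rw [Finset.disjoint_left]
      intro A hA hA'
      obtain ⟨B, hB, rfl⟩ := Finset.mem_image.mp hA'
      obtain ⟨y, hy⟩ := hint _ hA _ hB
      simp at hy
    have hcard : (𝓕.image compl).card = 𝓕.card :=
      Finset.card_image_of_injective _ compl_injective
    have hsub' : 𝓕 ∪ 𝓕.image compl ⊆ mFamily n p s := by
      intro A hA
      rcases Finset.mem_union.mp hA with h | h
      · exact hsub h
      · obtain ⟨B, hB, rfl⟩ := Finset.mem_image.mp h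
        exact compl_mem_mFamily n p s hn (hsub hB)
    have := Finset.card_le_card hsub'
    rw [Finset.card_union_of_disjoint hdisj, hcard] at this
    omega
  refine ⟨h1, fun x => ?_⟩
  have := star_half n p s hn x
  omega
end

section
/- (Katona's circle lemma) Let n ≥ 2k ≥ 2 and consider the n cyclic arcs of length k in Z/nZ, where the arc at position i is {i, i+1, ..., i+k-1} (mod n). If A is a collection of such arcs that is pairwise intersecting, then |A| ≤ k. -/
open Finset

/-- The cyclic arc of length `k` at position `i` in `ℤ/nℤ`: the set `{i, i+1, ..., i+k-1}`. -/
def arc (n k : ℕ) (i : ZMod n) : Finset (ZMod n) :=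
  (range k).image fun j : ℕ => i + (j : ZMod n)

lemma arc_inter_imp (n k : ℕ) (i j : ZMod n) (h : (arc n k i ∩ arc n k j).Nonempty) :
    ∃ t : ℕ, t < k ∧ (j = i + (t : ZMod n) ∨ i = j + (t : ZMod n)) := by
  obtain ⟨x, hx⟩ := h
  simp only [Finset.mem_inter, arc, Finset.mem_image, Finset.mem_range] at hx
  obtain ⟨⟨a, ha, hxa⟩, ⟨b, hb, hxb⟩⟩ := hx
  rcases le_total b a with hle | hle
  · refine ⟨a - b, by omega, Or.inl ?_⟩
    rw [Nat.cast_sub hle]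
    linear_combination hxb - hxa
  · refine ⟨b - a, by omega, Or.inr ?_⟩
    rw [Nat.cast_sub hle]
    linear_combination hxa - hxb

/-- Katona's circle lemma: a pairwise intersecting collection of arcs of length `k`
in `ℤ/nℤ` (with `n ≥ 2k ≥ 2`), given by its set `A` of starting positions, has at
most `k` members. -/
theorem katona_circle (n k : ℕ) (hk : 1 ≤ k) (hn : 2 * k ≤ n) (A : Finset (ZMod n))
    (hA : ∀ i ∈ A, ∀ j ∈ A, (arc n k i ∩ arc n k j).Nonempty) :
    A.card ≤ k := by
  classical
  have hnpos : 0 < n := by omega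
  have hcast : ∀ u v : ℕ, u < n → v < n → (u : ZMod n) = (v : ZMod n) → u = v := by
    intro u v hu hv huv
    have := congrArg ZMod.val huv
    rwa [ZMod.val_cast_of_lt hu, ZMod.val_cast_of_lt hv] at this
  rcases A.eq_empty_or_nonempty with rfl | ⟨i₀, hi₀⟩
  · simp
  -- key: j₁ = j₂ + k is impossible for two arcs in A
  have key : ∀ j₁ ∈ A, ∀ j₂ ∈ A, j₁ = j₂ + (k : ZMod n) → False := by
    intro j₁ h₁ j₂ h₂ heq
    obtain ⟨u, hu, hcase⟩ := arc_inter_imp n k j₁ j₂ (hA j₁ h₁ j₂ h₂)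
    rcases hcase with h | h
    · -- j₂ = j₁ + u, so j₂ = j₂ + (k + u), so n ∣ k + u
      rw [heq] at h
      have : ((k + u : ℕ) : ZMod n) = 0 := by
        push_cast
        linear_combination -h
      have hdvd : n ∣ k + u := (ZMod.natCast_eq_zero_iff _ _).mp this
      have := Nat.le_of_dvd (by omega) hdvd
      omega
    · -- j₁ = j₂ + u, so (k : ZMod n) = u hence k = u < k
      rw [heq] at h
      have : (u : ZMod n) = (k : ZMod n) := add_left_cancel h.symm
      have := hcast u k (by omega) (by omega) this
      omega
  set f : ZMod n → ℕ := fun j =>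
    if h : ∃ t, t < k ∧ j = i₀ + (t : ZMod n) then h.choose
    else if h2 : ∃ s, s < k ∧ i₀ = j + (s : ZMod n) then k - h2.choose else 0 with hf
  have hform : ∀ j ∈ A, (∃ t, t < k ∧ j = i₀ + (t : ZMod n)) ∨
      (∃ s, s < k ∧ i₀ = j + (s : ZMod n)) := by
    intro j hj
    obtain ⟨t, ht, hc⟩ := arc_inter_imp n k i₀ j (hA i₀ hi₀ j hj)
    rcases hc with h | h
    · exact Or.inl ⟨t, ht, h⟩
    · exact Or.inr ⟨t, ht, h⟩
  have hmaps : ∀ j ∈ A, f j ∈ range k := by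
    intro j hj
    rw [mem_range]
    simp only [hf]
    by_cases h : ∃ t, t < k ∧ j = i₀ + (t : ZMod n)
    · rw [dif_pos h]
      exact h.choose_spec.1
    · rw [dif_neg h]
      have h2 : ∃ s, s < k ∧ i₀ = j + (s : ZMod n) := (hform j hj).resolve_left h
      rw [dif_pos h2]
      have hs := h2.choose_spec
      have hs0 : h2.choose ≠ 0 := by
        intro h0
        apply h
        exact ⟨0, by omega, by simpa [h0] using hs.2.symm⟩
      omega
  have hinj : Set.InjOn f A := by
    intro j₁ h₁ j₂ h₂ hfe
    by_cases c1 : ∃ t, t < k ∧ j₁ = i₀ + (t : ZMod n) <;>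
      by_cases c2 : ∃ t, t < k ∧ j₂ = i₀ + (t : ZMod n)
    · -- both plus
      simp only [hf] at hfe
      rw [dif_pos c1, dif_pos c2] at hfe
      rw [c1.choose_spec.2, c2.choose_spec.2, hfe]
    · have c2' : ∃ s, s < k ∧ i₀ = j₂ + (s : ZMod n) := (hform j₂ h₂).resolve_left c2
      simp only [hf] at hfe
      rw [dif_pos c1, dif_neg c2, dif_pos c2'] at hfe
      obtain ⟨ht, hj1⟩ := c1.choose_spec
      obtain ⟨hs, hj2⟩ := c2'.choose_spec
      have hs0 : c2'.choose ≠ 0 := by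
        intro h0
        exact c2 ⟨0, by omega, by simpa [h0] using hj2.symm⟩
      -- t = k - s, so t + s = k, j₁ = j₂ + k
      exfalso
      apply key j₁ h₁ j₂ h₂
      have hts : c1.choose + c2'.choose = k := by omega
      calc j₁ = i₀ + (c1.choose : ZMod n) := hj1
        _ = j₂ + (c2'.choose : ZMod n) + (c1.choose : ZMod n) := by rw [← hj2]
        _ = j₂ + ((c2'.choose + c1.choose : ℕ) : ZMod n) := by push_cast; ring
        _ = j₂ + (k : ZMod n) := by rw [show c2'.choose + c1.choose = k from by omega]
    · have c1' : ∃ s, s < k ∧ i₀ = j₁ + (s : ZMod n) := (hform j₁ h₁).resolve_left c1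
      simp only [hf] at hfe
      rw [dif_neg c1, dif_pos c1', dif_pos c2] at hfe
      obtain ⟨ht, hj2⟩ := c2.choose_spec
      obtain ⟨hs, hj1⟩ := c1'.choose_spec
      have hs0 : c1'.choose ≠ 0 := by
        intro h0
        exact c1 ⟨0, by omega, by simpa [h0] using hj1.symm⟩
      exfalso
      apply key j₂ h₂ j₁ h₁
      calc j₂ = i₀ + (c2.choose : ZMod n) := hj2
        _ = j₁ + (c1'.choose : ZMod n) + (c2.choose : ZMod n) := by rw [← hj1]
        _ = j₁ + ((c1'.choose + c2.choose : ℕ) : ZMod n) := by push_cast; ring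
        _ = j₁ + (k : ZMod n) := by rw [show c1'.choose + c2.choose = k from by omega]
    · -- both minus
      have c1' : ∃ s, s < k ∧ i₀ = j₁ + (s : ZMod n) := (hform j₁ h₁).resolve_left c1
      have c2' : ∃ s, s < k ∧ i₀ = j₂ + (s : ZMod n) := (hform j₂ h₂).resolve_left c2
      simp only [hf] at hfe
      rw [dif_neg c1, dif_pos c1', dif_neg c2, dif_pos c2'] at hfe
      obtain ⟨hs1, hj1⟩ := c1'.choose_spec
      obtain ⟨hs2, hj2⟩ := c2'.choose_spec
      have : c1'.choose = c2'.choose := by omega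
      have heq : j₁ + (c1'.choose : ZMod n) = j₂ + (c1'.choose : ZMod n) := by
        rw [← hj1, this, ← hj2]
      exact add_right_cancel heq
  calc A.card ≤ (range k).card := Finset.card_le_card_of_injOn f hmaps hinj
    _ = k := card_range k
end

section
/- (Corollary to Katona's circle lemma) Let n ≥ 2k+1 and suppose A is a pairwise intersecting collection of exactly k arcs of length k in Z/nZ. Then the arcs in A are k consecutive arcs, i.e., there exists j ∈ Z/nZ such that A = { arc at position j, arc at position j+1, ..., arc at position j+k-1 }; in particular all arcs in A contain the common point j+k-1. -/
open Finset

lemma mem_arc {n k : ℕ} {i x : ZMod n} : x ∈ arc n k i ↔ ∃ t, t < k ∧ i + (t : ZMod n) = x := by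
  simp [arc]

lemma zmod_int_cases {n : ℕ} {x y : ℤ} (h : ((x : ZMod n)) = (y : ZMod n))
    (hb : x - y < 2*n) (hb' : y - x < 2*n) : x - y = 0 ∨ x - y = n ∨ x - y = -n := by
  have h0 : ((x - y : ℤ) : ZMod n) = 0 := by push_cast; rw [h]; ring
  obtain ⟨c, hc⟩ := (ZMod.intCast_zmod_eq_zero_iff_dvd _ _).mp h0
  have hN : (0:ℤ) ≤ (n:ℤ) := Int.natCast_nonneg n
  have hcases : c ≤ -2 ∨ c = -1 ∨ c = 0 ∨ c = 1 ∨ 2 ≤ c := by omega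
  rcases hcases with h1 | h1 | h1 | h1 | h1
  · exfalso
    have : (n:ℤ) * c ≤ (n:ℤ) * (-2) := mul_le_mul_of_nonneg_left (by omega) hN
    linarith
  · right; right; rw [hc, h1]; ring
  · left; rw [hc, h1]; ring
  · right; left; rw [hc, h1]; ring
  · exfalso
    have : (n:ℤ) * 2 ≤ (n:ℤ) * c := mul_le_mul_of_nonneg_left (by omega) hN
    linarith

lemma zmod_int_eq {n : ℕ} {x y : ℤ} (h : ((x : ZMod n)) = (y : ZMod n))
    (hb : x - y < n) (hb' : y - x < n) : x = y := by
  rcases zmod_int_cases h (by omega) (by omega) with h1 | h1 | h1 <;> omega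

/-- The key combinatorial lemma over `ℤ`: a set of `k` integers containing `0`, lying in
the window `[1-k, k-1]`, with all pairwise differences either at most `k-1` or at least
`n-k+1`, must be a block of `k` consecutive integers. -/
lemma clique_interval (n k : ℕ) (hk : 1 ≤ k) (hn : 2*k+1 ≤ n) (S : Finset ℤ)
    (h0 : (0:ℤ) ∈ S) (hcard : S.card = k)
    (hwin : ∀ s ∈ S, 1 - (k:ℤ) ≤ s ∧ s ≤ (k:ℤ) - 1)
    (hpair : ∀ x ∈ S, ∀ y ∈ S,
      (x - y ≤ (k:ℤ) - 1 ∧ y - x ≤ (k:ℤ) - 1) ∨ ((n:ℤ) - k + 1 ≤ x - y ∨ (n:ℤ) - k + 1 ≤ y - x)) :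
    ∃ m : ℤ, S = Finset.Icc m (m + k - 1) := by
  -- Step 1: `t` and `t - k` can never both lie in `S`
  have hone : ∀ t : ℤ, t ∈ S → t - k ∈ S → False := by
    intro t ht ht'
    have := hpair t ht (t - k) ht'
    omega
  -- Step 2: for each `t ∈ [1, k-1]`, one of `t`, `t - k` lies in `S`
  have hsurj : ∀ t : ℤ, 1 ≤ t → t ≤ (k:ℤ) - 1 → (t ∈ S ∨ t - k ∈ S) := by
    intro t h1 h2
    by_contra hcon
    push_neg at hcon
    set f : ℤ → ℤ := fun s => if 0 < s then s else s + k with hf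
    have hmapsto : ∀ s ∈ S.erase 0, f s ∈ Finset.Icc (1:ℤ) ((k:ℤ)-1) := by
      intro s hs
      have hs0 : s ≠ 0 := (Finset.mem_erase.mp hs).1
      have hsS : s ∈ S := (Finset.mem_erase.mp hs).2
      have := hwin s hsS
      simp only [hf, Finset.mem_Icc]
      split <;> omega
    have hinj : Set.InjOn f (S.erase 0) := by
      intro x hx y hy hxy
      have hxS : x ∈ S := (Finset.mem_erase.mp hx).2
      have hyS : y ∈ S := (Finset.mem_erase.mp hy).2
      simp only [hf] at hxy
      split_ifs at hxy with h1 h2 h2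
      · exact hxy
      · exact (hone x hxS (by rw [show x - (k:ℤ) = y by omega]; exact hyS)).elim
      · exact (hone y hyS (by rw [show y - (k:ℤ) = x by omega]; exact hxS)).elim
      · omega
    have hcard' : ((S.erase 0).image f).card = k - 1 := by
      rw [Finset.card_image_of_injOn hinj, Finset.card_erase_of_mem h0, hcard]
    have hsub : (S.erase 0).image f ⊆ Finset.Icc 1 ((k:ℤ)-1) := by
      intro u hu
      obtain ⟨s, hs, rfl⟩ := Finset.mem_image.mp hu
      exact hmapsto s hs
    have hicc : (Finset.Icc (1:ℤ) ((k:ℤ)-1)).card = k - 1 := by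
      rw [Int.card_Icc]; omega
    have heq : (S.erase 0).image f = Finset.Icc 1 ((k:ℤ)-1) :=
      Finset.eq_of_subset_of_card_le hsub (by omega)
    have htmem : t ∈ (S.erase 0).image f := by
      rw [heq, Finset.mem_Icc]; exact ⟨h1, h2⟩
    obtain ⟨s, hs, hfs⟩ := Finset.mem_image.mp htmem
    have hsS : s ∈ S := (Finset.mem_erase.mp hs).2
    simp only [hf] at hfs
    split_ifs at hfs
    · exact hcon.1 (hfs ▸ hsS)
    · exact hcon.2 (by rw [show t - (k:ℤ) = s by omega]; exact hsS)
  -- Step 3: there are no "long" pairs, i.e. all pairwise differences are at most `k-1`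
  have hshort : ∀ x ∈ S, ∀ y ∈ S, x - y ≤ (k:ℤ) - 1 := by
    by_contra hcon
    push_neg at hcon
    obtain ⟨x0, hx0, y0, hy0, hlong0⟩ := hcon
    set P := (S ×ˢ S).filter (fun p => (k:ℤ) ≤ p.1 - p.2) with hP
    have hx0w := hwin x0 hx0
    have hy0w := hwin y0 hy0
    have hPne : P.Nonempty := by
      refine ⟨(x0, y0), ?_⟩
      rw [hP, Finset.mem_filter, Finset.mem_product]
      have := hpair x0 hx0 y0 hy0
      exact ⟨⟨hx0, hy0⟩, by omega⟩
    obtain ⟨p, hpP, hpmin⟩ := P.exists_min_image (fun p => p.1 - p.2) hPne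
    rw [hP, Finset.mem_filter, Finset.mem_product] at hpP
    obtain ⟨⟨hx, hy⟩, hplong⟩ := hpP
    have hxy : (n:ℤ) - k + 1 ≤ p.1 - p.2 := by
      rcases hpair p.1 hx p.2 hy with h | h | h <;> omega
    have hwx := hwin p.1 hx
    have hwy := hwin p.2 hy
    rcases hsurj (p.2 + k + 1) (by omega) (by omega) with hsS | hsS
    · have := hpair (p.2 + k + 1) hsS p.2 hy
      omega
    · rw [show p.2 + (k:ℤ) + 1 - k = p.2 + 1 by ring] at hsS
      rcases hpair p.1 hx (p.2 + 1) hsS with h | h | h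
      · omega
      · have := hpmin (p.1, p.2 + 1) (by
          rw [hP, Finset.mem_filter, Finset.mem_product]
          exact ⟨⟨hx, hsS⟩, by simp; omega⟩)
        simp at this
        omega
      · omega
  -- Step 4: conclude that `S` is an interval
  have hSne : S.Nonempty := ⟨0, h0⟩
  refine ⟨S.min' hSne, ?_⟩
  apply Finset.eq_of_subset_of_card_le
  · intro s hs
    rw [Finset.mem_Icc]
    refine ⟨S.min'_le s hs, ?_⟩
    have := hshort s hs (S.min' hSne) (S.min'_mem hSne)
    omega
  · rw [Int.card_Icc, hcard]
    omega

/-- Corollary to Katona's circle lemma: for `n ≥ 2k+1`, a pairwise intersecting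
collection of exactly `k` arcs of length `k` (given by its set `A` of starting
positions) consists of `k` consecutive arcs, all containing the common point `j + (k-1)`. -/
theorem katona_circle_corollary (n k : ℕ) (hn : 2 * k + 1 ≤ n) (A : Finset (ZMod n))
    (hA : ∀ i ∈ A, ∀ j ∈ A, (arc n k i ∩ arc n k j).Nonempty) (hcard : A.card = k) :
    ∃ j : ZMod n, A = (range k).image (fun t : ℕ => j + (t : ZMod n)) ∧
      ∀ i ∈ A, j + ((k - 1 : ℕ) : ZMod n) ∈ arc n k i := by
  -- trivial case `k = 0`
  rcases Nat.eq_zero_or_pos k with hk0 | hk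
  · subst hk0
    have hAe : A = ∅ := Finset.card_eq_zero.mp hcard
    refine ⟨0, by simp [hAe], ?_⟩
    intro i hi
    rw [hAe] at hi
    simp at hi
  haveI : NeZero n := ⟨by omega⟩
  have hAne : A.Nonempty := Finset.card_pos.mp (by omega)
  obtain ⟨a, haA⟩ := hAne
  -- the integer offset of `b` relative to `a`
  set o : ZMod n → ℤ :=
    fun b => if (b - a).val ≤ k - 1 then ((b - a).val : ℤ) else ((b - a).val : ℤ) - n with ho
  have hcast : ∀ b : ZMod n, ((o b : ℤ) : ZMod n) = b - a := by
    intro b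
    simp only [ho]
    split <;> push_cast <;> simp [ZMod.natCast_val, ZMod.cast_id]
  have hob : ∀ b : ZMod n, (k:ℤ) - n ≤ o b ∧ o b ≤ (k:ℤ) - 1 := by
    intro b
    have hv : (b - a).val < n := ZMod.val_lt _
    simp only [ho]
    split <;> constructor <;> omega
  have hinter : ∀ b ∈ A, ∀ c ∈ A, ∃ p q : ℕ, p < k ∧ q < k ∧ b + (p:ZMod n) = c + (q:ZMod n) := by
    intro b hb c hc
    obtain ⟨x, hx⟩ := hA b hb c hc
    rw [Finset.mem_inter] at hx
    obtain ⟨hx1, hx2⟩ := hx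
    rw [mem_arc] at hx1 hx2
    obtain ⟨p, hp, hpe⟩ := hx1
    obtain ⟨q, hq, hqe⟩ := hx2
    exact ⟨p, q, hp, hq, by rw [hpe, hqe]⟩
  have hoeq : ∀ (b : ZMod n) (p q : ℕ), p < k → q < k →
      a + (p:ZMod n) = b + (q:ZMod n) → o b = (p:ℤ) - q := by
    intro b p q hp hq heq
    have h1 : ((o b : ℤ) : ZMod n) = (((p:ℤ) - q : ℤ) : ZMod n) := by
      rw [hcast]
      push_cast
      linear_combination -heq
    have h2 := hob b
    exact zmod_int_eq h1 (by omega) (by omega)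
  have hwinA : ∀ b ∈ A, 1 - (k:ℤ) ≤ o b ∧ o b ≤ (k:ℤ) - 1 := by
    intro b hb
    obtain ⟨p, q, hp, hq, he⟩ := hinter a haA b hb
    have := hoeq b p q hp hq he
    omega
  have hoa : o a = 0 := by
    simp [ho]
  have hbeq : ∀ b : ZMod n, b = a + ((o b : ℤ) : ZMod n) := by
    intro b; rw [hcast]; ring
  have hinj : Set.InjOn o A := by
    intro x _ y _ hxy
    rw [hbeq x, hbeq y, hxy]
  set S := A.image o with hS
  have hcardS : S.card = k := by rw [hS, Finset.card_image_of_injOn hinj, hcard]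
  have h0S : (0:ℤ) ∈ S := by rw [hS]; exact Finset.mem_image.mpr ⟨a, haA, hoa⟩
  have hwinS : ∀ s ∈ S, 1 - (k:ℤ) ≤ s ∧ s ≤ (k:ℤ) - 1 := by
    intro s hs
    obtain ⟨b, hb, rfl⟩ := Finset.mem_image.mp hs
    exact hwinA b hb
  have hpairS : ∀ x ∈ S, ∀ y ∈ S,
      (x - y ≤ (k:ℤ) - 1 ∧ y - x ≤ (k:ℤ) - 1) ∨ ((n:ℤ) - k + 1 ≤ x - y ∨ (n:ℤ) - k + 1 ≤ y - x) := by
    intro x hx y hy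
    obtain ⟨b, hb, rfl⟩ := Finset.mem_image.mp hx
    obtain ⟨c, hc, rfl⟩ := Finset.mem_image.mp hy
    obtain ⟨p, q, hp, hq, he⟩ := hinter b hb c hc
    have h1 : ((o b - o c : ℤ) : ZMod n) = (((q:ℤ) - p : ℤ) : ZMod n) := by
      push_cast
      rw [hcast b, hcast c]
      linear_combination he
    have hwb := hwinA b hb
    have hwc := hwinA c hc
    have := zmod_int_cases h1 (by omega) (by omega)
    omega
  obtain ⟨m, hm⟩ := clique_interval n k hk hn S h0S hcardS hwinS hpairS
  rw [hS] at hm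
  -- the collection consists of the `k` consecutive arcs starting at `a + m`
  have hAeq : A = (range k).image (fun t : ℕ => (a + ((m:ℤ):ZMod n)) + (t : ZMod n)) := by
    have hAsub : A ⊆ (range k).image (fun t : ℕ => (a + ((m:ℤ):ZMod n)) + (t:ZMod n)) := by
      intro b hb
      have hbS : o b ∈ A.image o := Finset.mem_image.mpr ⟨b, hb, rfl⟩
      rw [hm, Finset.mem_Icc] at hbS
      refine Finset.mem_image.mpr ⟨(o b - m).toNat, Finset.mem_range.mpr (by omega), ?_⟩
      have h2 : (((o b - m).toNat : ℕ) : ZMod n) = (((o b - m : ℤ)) : ZMod n) := by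
        rw [← Int.cast_natCast, Int.toNat_of_nonneg (by omega : (0:ℤ) ≤ o b - m)]
      rw [h2]
      conv_rhs => rw [hbeq b]
      push_cast
      ring
    have hinj2 : Set.InjOn (fun t : ℕ => (a + ((m:ℤ):ZMod n)) + (t:ZMod n)) (range k) := by
      intro s hs t ht hst
      simp only [Finset.coe_range, Set.mem_Iio] at hs ht
      have h1 : (s : ZMod n) = (t : ZMod n) := by
        simpa using add_left_cancel hst
      have h2 := congrArg ZMod.val h1
      rwa [ZMod.val_cast_of_lt (by omega), ZMod.val_cast_of_lt (by omega)] at h2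
    refine Finset.eq_of_subset_of_card_le hAsub ?_
    rw [Finset.card_image_of_injOn hinj2, Finset.card_range, hcard]
  refine ⟨a + ((m:ℤ):ZMod n), hAeq, ?_⟩
  intro i hi
  rw [hAeq] at hi
  obtain ⟨t, ht, rfl⟩ := Finset.mem_image.mp hi
  rw [Finset.mem_range] at ht
  rw [mem_arc]
  refine ⟨k - 1 - t, by omega, ?_⟩
  have h3 : (t : ZMod n) + ((k - 1 - t : ℕ) : ZMod n) = ((k - 1 : ℕ) : ZMod n) := by
    rw [← Nat.cast_add]
    congr 1
    omega
  rw [add_assoc, h3]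
end

section
/- Fix p, s ≥ 1 and n ≥ 2(p+s), a permutation σ of [n], and a sign sequence τ ∈ {0,1}^n; consider the cyclic order of the edges of M_n determined by (σ, τ). If F is a pairwise intersecting family of vertex subsets of M_n each of which is either a B-interval or an R-interval of this cyclic order, then |F| ≤ 2p+s. -/
open Finset

/-- The `B`-interval at position `i` of the cyclic order `C_σ^τ` of the edges of the
perfect matching graph `M_n` (vertex set `ZMod n × Bool`): both endpoints of the edges
`e_{σ(i)}, ..., e_{σ(i+p-1)}` together with the singleton vertices
`e_{σ(i+p)}^{τ(i+p)}, ..., e_{σ(i+p+s-1)}^{τ(i+p+s-1)}` (positions mod `n`). -/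
def Binterval (n p s : ℕ) (σ : Equiv.Perm (ZMod n)) (τ : ZMod n → Bool) (i : ZMod n) :
    Finset (ZMod n × Bool) :=
  ((range p).image fun j : ℕ => (σ (i + (j : ZMod n)), false)) ∪
  ((range p).image fun j : ℕ => (σ (i + (j : ZMod n)), true)) ∪
  ((range s).image fun j : ℕ =>
    (σ (i + (p : ZMod n) + (j : ZMod n)), τ (i + (p : ZMod n) + (j : ZMod n))))

/-- The `R`-interval at position `i` of the cyclic order `C_σ^τ`: the singleton vertices
`e_{σ(i)}^{τ(i)+1}, ..., e_{σ(i+s-1)}^{τ(i+s-1)+1}` together with both endpoints of the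
edges `e_{σ(i+s)}, ..., e_{σ(i+p+s-1)}` (positions mod `n`, signs mod `2`). -/
def Rinterval (n p s : ℕ) (σ : Equiv.Perm (ZMod n)) (τ : ZMod n → Bool) (i : ZMod n) :
    Finset (ZMod n × Bool) :=
  ((range s).image fun j : ℕ => (σ (i + (j : ZMod n)), !τ (i + (j : ZMod n)))) ∪
  ((range p).image fun j : ℕ => (σ (i + (s : ZMod n) + (j : ZMod n)), false)) ∪
  ((range p).image fun j : ℕ => (σ (i + (s : ZMod n) + (j : ZMod n)), true))

section Helpers

variable {n : ℕ} [NeZero n]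

lemma val_add_val_eq {x y : ZMod n} (h : x ≠ y) : (x - y).val + (y - x).val = n := by
  have h1 : x - y ≠ 0 := sub_ne_zero.mpr h
  have h2 : y - x = -(x - y) := by ring
  have h3 := ZMod.val_lt (x - y)
  rw [h2, ZMod.neg_val]
  simp [h1]
  omega

omit [NeZero n] in
lemma cast_sub_val {c c' : ℕ} (hc : c < n) (h : c' ≤ c) :
    ((c : ZMod n) - (c' : ZMod n)).val = c - c' := by
  have : (c : ZMod n) - (c' : ZMod n) = ((c - c' : ℕ) : ZMod n) := by
    rw [Nat.cast_sub h]
  rw [this, ZMod.val_cast_of_lt (by omega)]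

/-- Katona's lemma: a family of positions in `ZMod n`, pairwise at cyclic distance
less than `k` (in one of the two directions), has at most `k` members when `n ≥ 2k`. -/
lemma katona {k : ℕ} (hn : 2 * k ≤ n) (V : Finset (ZMod n))
    (h : ∀ x ∈ V, ∀ y ∈ V, (x - y).val < k ∨ (y - x).val < k) : V.card ≤ k := by
  rcases V.eq_empty_or_nonempty with rfl | ⟨v0, hv0⟩
  · simp
  have hk : 1 ≤ k := by
    rcases h v0 hv0 v0 hv0 with h' | h' <;> omega
  rw [show k = (range k).card by simp]
  apply Finset.card_le_card_of_injOn
    (fun v => if (v - v0).val < k then (v - v0).val else (v - v0).val - (n - k))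
  · intro v hv
    simp only [Finset.mem_coe, mem_range]
    split
    · assumption
    · rename_i hge
      have hne : v ≠ v0 := by
        intro h'; subst h'; simp at hge; omega
      have h4 := val_add_val_eq hne
      have h5 := ZMod.val_lt (v - v0)
      rcases h v hv v0 hv0 with h' | h' <;> omega
  · intro u hu v hv hf
    by_contra hne
    have hval : (u - v0).val ≠ (v - v0).val := by
      intro h'
      exact hne (by
        have e1 : ((u - v0).val : ZMod n) = u - v0 := ZMod.natCast_rightInverse _
        have e2 : ((v - v0).val : ZMod n) = v - v0 := ZMod.natCast_rightInverse _
        have : u - v0 = v - v0 := by rw [← e1, ← e2, h']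
        linear_combination this)
    have key : ∀ w ∈ V, ¬ (w - v0).val < k → n - k < (w - v0).val := by
      intro w hw hge
      have hne' : w ≠ v0 := by intro h'; subst h'; simp at hge; omega
      have h4 := val_add_val_eq hne'
      rcases h w hw v0 hv0 with h' | h' <;> omega
    simp only at hf
    have main : ∀ a ∈ V, ∀ b ∈ V, (a - v0).val < k → ¬ (b - v0).val < k →
        ((a - v0).val = (b - v0).val - (n - k)) → False := by
      intro a ha b hb h1 h2 heq
      have h3 := key b hb h2
      have hblt := ZMod.val_lt (b - v0)
      have hab : b - a = (((b - v0).val : ZMod n)) - (((a - v0).val : ZMod n)) := by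
        have e1 : ((a - v0).val : ZMod n) = a - v0 := ZMod.natCast_rightInverse _
        have e2 : ((b - v0).val : ZMod n) = b - v0 := ZMod.natCast_rightInverse _
        rw [e1, e2]; ring
      have hle : (a - v0).val ≤ (b - v0).val := by omega
      have hv1 : (b - a).val = (b - v0).val - (a - v0).val := by
        rw [hab, cast_sub_val hblt hle]
      have hba : b ≠ a := by
        intro h'; subst h'; omega
      have h5 := val_add_val_eq hba
      rcases h a ha b hb with h' | h' <;> omega
    split at hf <;> split at hf
    · omega
    · rename_i h1 h2; exact main u hu v hv h1 h2 hf
    · rename_i h1 h2; exact main v hv u hu h2 h1 hf.symm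
    · rename_i h1 h2
      have k1 := key u hu h1
      have k2 := key v hv h2
      omega

end Helpers

section Mem

variable {n p s : ℕ} {σ : Equiv.Perm (ZMod n)} {τ : ZMod n → Bool}

lemma mem_Binterval' {i : ZMod n} {x : ZMod n × Bool} (hx : x ∈ Binterval n p s σ τ i) :
    ∃ c : ℕ, c < p + s ∧ x.1 = σ (i + (c : ZMod n)) ∧ (p ≤ c → x.2 = τ (i + (c : ZMod n))) := by
  simp only [Binterval, mem_union, mem_image, mem_range] at hx
  rcases hx with (⟨j, hj, rfl⟩ | ⟨j, hj, rfl⟩) | ⟨j, hj, rfl⟩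
  · exact ⟨j, by omega, rfl, fun h => absurd hj (by omega)⟩
  · exact ⟨j, by omega, rfl, fun h => absurd hj (by omega)⟩
  · refine ⟨p + j, by omega, ?_, fun _ => ?_⟩ <;> simp [Nat.cast_add, add_assoc]

lemma mem_Rinterval' {i : ZMod n} {x : ZMod n × Bool} (hx : x ∈ Rinterval n p s σ τ i) :
    ∃ c : ℕ, c < p + s ∧ x.1 = σ (i + (c : ZMod n)) ∧ (c < s → x.2 = !τ (i + (c : ZMod n))) := by
  simp only [Rinterval, mem_union, mem_image, mem_range] at hx
  rcases hx with (⟨j, hj, rfl⟩ | ⟨j, hj, rfl⟩) | ⟨j, hj, rfl⟩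
  · exact ⟨j, by omega, rfl, fun _ => rfl⟩
  · refine ⟨s + j, by omega, ?_, fun h => absurd h (by omega)⟩
    simp [Nat.cast_add, add_assoc]
  · refine ⟨s + j, by omega, ?_, fun h => absurd h (by omega)⟩
    simp [Nat.cast_add, add_assoc]

variable [NeZero n]

lemma BB_cond (hn : p + s ≤ n) {a b : ZMod n}
    (h : (Binterval n p s σ τ a ∩ Binterval n p s σ τ b).Nonempty) :
    (b - a).val < p + s ∨ (a - b).val < p + s := by
  obtain ⟨x, hx⟩ := h
  rw [mem_inter] at hx
  obtain ⟨c, hc, hc1, -⟩ := mem_Binterval' hx.1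
  obtain ⟨c', hc', hc1', -⟩ := mem_Binterval' hx.2
  have hpos : a + (c : ZMod n) = b + (c' : ZMod n) := σ.injective (hc1 ▸ hc1')
  rcases le_total c' c with hle | hle
  · left
    have hba : b - a = (c : ZMod n) - (c' : ZMod n) := by linear_combination -hpos
    rw [hba, cast_sub_val (by omega) hle]
    omega
  · right
    have hab : a - b = (c' : ZMod n) - (c : ZMod n) := by linear_combination hpos
    rw [hab, cast_sub_val (by omega) hle]
    omega

lemma RR_cond (hn : p + s ≤ n) {a b : ZMod n}
    (h : (Rinterval n p s σ τ a ∩ Rinterval n p s σ τ b).Nonempty) :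
    (b - a).val < p + s ∨ (a - b).val < p + s := by
  obtain ⟨x, hx⟩ := h
  rw [mem_inter] at hx
  obtain ⟨c, hc, hc1, -⟩ := mem_Rinterval' hx.1
  obtain ⟨c', hc', hc1', -⟩ := mem_Rinterval' hx.2
  have hpos : a + (c : ZMod n) = b + (c' : ZMod n) := σ.injective (hc1 ▸ hc1')
  rcases le_total c' c with hle | hle
  · left
    have hba : b - a = (c : ZMod n) - (c' : ZMod n) := by linear_combination -hpos
    rw [hba, cast_sub_val (by omega) hle]
    omega
  · right
    have hab : a - b = (c' : ZMod n) - (c : ZMod n) := by linear_combination hpos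
    rw [hab, cast_sub_val (by omega) hle]
    omega

lemma BR_cond (hn : p + s ≤ n) {a b : ZMod n}
    (h : (Binterval n p s σ τ a ∩ Rinterval n p s σ τ b).Nonempty) :
    (b - a).val < p ∨ (a - b).val < p + s := by
  obtain ⟨x, hx⟩ := h
  rw [mem_inter] at hx
  obtain ⟨c, hc, hc1, hc2⟩ := mem_Binterval' hx.1
  obtain ⟨c', hc', hc1', hc2'⟩ := mem_Rinterval' hx.2
  have hpos : a + (c : ZMod n) = b + (c' : ZMod n) := σ.injective (hc1 ▸ hc1')
  have compat : c < p ∨ s ≤ c' := by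
    by_contra hcon
    push_neg at hcon
    have e1 : x.2 = τ (a + (c : ZMod n)) := hc2 (by omega)
    have e2 : x.2 = !τ (b + (c' : ZMod n)) := hc2' (by omega)
    rw [hpos] at e1
    rw [e1] at e2
    simp at e2
  rcases le_total c' c with hle | hle
  · left
    have hba : b - a = (c : ZMod n) - (c' : ZMod n) := by linear_combination -hpos
    rw [hba, cast_sub_val (by omega) hle]
    omega
  · right
    have hab : a - b = (c' : ZMod n) - (c : ZMod n) := by linear_combination hpos
    rw [hab, cast_sub_val (by omega) hle]
    omega

end Mem

/-- Analogue of Katona's lemma: a pairwise intersecting family of `B`- and `R`-intervals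
of a fixed cyclic order has at most `2p+s` members. -/
theorem interval_intersecting_bound (n p s : ℕ) (hp : 1 ≤ p) (hs : 1 ≤ s)
    (hn : 2 * (p + s) ≤ n) (σ : Equiv.Perm (ZMod n)) (τ : ZMod n → Bool)
    (𝓕 : Finset (Finset (ZMod n × Bool)))
    (hmem : ∀ A ∈ 𝓕, ∃ i : ZMod n, A = Binterval n p s σ τ i ∨ A = Rinterval n p s σ τ i)
    (hint : Intersecting 𝓕) :
    𝓕.card ≤ 2 * p + s := by
  haveI : NeZero n := ⟨by omega⟩
  classical
  set TB := Finset.univ.filter (fun i : ZMod n => Binterval n p s σ τ i ∈ 𝓕) with hTB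
  set TR := Finset.univ.filter (fun i : ZMod n => Rinterval n p s σ τ i ∈ 𝓕) with hTR
  have hmemB : ∀ i ∈ TB, Binterval n p s σ τ i ∈ 𝓕 := by
    intro i hi; rw [hTB, mem_filter] at hi; exact hi.2
  have hmemR : ∀ i ∈ TR, Rinterval n p s σ τ i ∈ 𝓕 := by
    intro i hi; rw [hTR, mem_filter] at hi; exact hi.2
  have hsub : 𝓕 ⊆ TB.image (Binterval n p s σ τ) ∪ TR.image (Rinterval n p s σ τ) := by
    intro A hA
    obtain ⟨i, hi | hi⟩ := hmem A hA
    · exact mem_union_left _ (mem_image.mpr ⟨i, by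
        rw [hTB, mem_filter]; exact ⟨mem_univ _, hi ▸ hA⟩, hi.symm⟩)
    · exact mem_union_right _ (mem_image.mpr ⟨i, by
        rw [hTR, mem_filter]; exact ⟨mem_univ _, hi ▸ hA⟩, hi.symm⟩)
  have h1 : 𝓕.card ≤ TB.card + TR.card :=
    (card_le_card hsub).trans ((card_union_le _ _).trans
      (Nat.add_le_add (card_image_le) (card_image_le)))
  have hn' : p + s ≤ n := by omega
  have hcup : (TB ∪ TR).card ≤ p + s := by
    apply katona (by omega)
    intro x hx y hy
    rw [mem_union] at hx hy
    rcases hx with hx | hx <;> rcases hy with hy | hy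
    · rcases BB_cond hn' (hint _ (hmemB _ hy) _ (hmemB _ hx)) with h' | h'
      · left; exact h'
      · right; exact h'
    · rcases BR_cond hn' (hint _ (hmemB _ hx) _ (hmemR _ hy)) with h' | h'
      · right; omega
      · left; exact h'
    · rcases BR_cond hn' (hint _ (hmemB _ hy) _ (hmemR _ hx)) with h' | h'
      · left; omega
      · right; exact h'
    · rcases RR_cond hn' (hint _ (hmemR _ hy) _ (hmemR _ hx)) with h' | h'
      · left; exact h'
      · right; exact h'
  have hcap : (TB ∩ TR).card ≤ p := by
    apply katona (by omega)
    intro x hx y hy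
    rw [mem_inter] at hx hy
    by_cases hxy : x = y
    · subst hxy; left; simp [ZMod.val_zero]; omega
    have c1 := BR_cond (σ := σ) (τ := τ) hn' (hint _ (hmemB _ hx.1) _ (hmemR _ hy.2))
    have c2 := BR_cond (σ := σ) (τ := τ) hn' (hint _ (hmemB _ hy.1) _ (hmemR _ hx.2))
    have hsum := val_add_val_eq (x := x) (y := y) hxy
    rcases c1 with h' | h' <;> rcases c2 with h'' | h''
    · right; exact h'
    · right; exact h'
    · left; exact h''
    · omega
  have hue := card_union_add_card_inter TB TR
  omega
end
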